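/- arXiv:2602.06188 — 3 statements merged into one kernel-verified Lean document; each statement's English description precedes it below -/
import Mathlib

section
/- Let θ be a congruence on the Płonka sum A of a semilattice direct system of groups, and let i, j, k ∈ I with (i,j) ∈ S_θ and (j,k) ∈ S_θ. Then (i,k) ∈ S_θ if and only if there exist a ∈ G i and c ∈ G k such that ⟨i⊔k, p_{i,i⊔k}(a)⟩ and ⟨i⊔k, p_{k,i⊔k}(c)⟩ are θ-related. -/
/-! Płonka sum of a semilattice direct system of groups.

`I` is a join-semilattice, `G i` are groups, and `p i j h : G i →* G j` (for `h : i ≤ j`)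
are the transition homomorphisms. The Płonka sum is the sigma type `Σ i, G i` with
multiplication `⟨i,a⟩·⟨j,b⟩ = ⟨i⊔j, p_{i,i⊔j}(a) · p_{j,i⊔j}(b)⟩` and inversion
`⟨i,a⟩⁻¹ = ⟨i,a⁻¹⟩` (a Clifford semigroup). -/

variable {I : Type*} [SemilatticeSup I] {G : I → Type*} [∀ i, Group (G i)]

/-- Multiplication of the Płonka sum. -/
def pmul (p : ∀ i j : I, i ≤ j → (G i →* G j)) (x y : Σ i, G i) : Σ i, G i :=
  ⟨x.1 ⊔ y.1, p x.1 (x.1 ⊔ y.1) le_sup_left x.2 * p y.1 (x.1 ⊔ y.1) le_sup_right y.2⟩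

/-- Inversion of the Płonka sum. -/
def pinv (x : Σ i, G i) : Σ i, G i := ⟨x.1, x.2⁻¹⟩

/-- `θ` is a congruence on the Płonka sum: an equivalence relation compatible with
multiplication and inversion. -/
def IsCong (p : ∀ i j : I, i ≤ j → (G i →* G j))
    (θ : (Σ i, G i) → (Σ i, G i) → Prop) : Prop :=
  Equivalence θ ∧
    (∀ x x' y y', θ x x' → θ y y' → θ (pmul p x y) (pmul p x' y')) ∧
    (∀ x x', θ x x' → θ (pinv x) (pinv x'))

/-- `S_θ`: the pairs of indices related by `θ`. -/
def Srel (θ : (Σ i, G i) → (Σ i, G i) → Prop) (i j : I) : Prop :=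
  ∃ (a : G i) (b : G j), θ ⟨i, a⟩ ⟨j, b⟩

/-- `C_θ`. -/
def Crel (θ : (Σ i, G i) → (Σ i, G i) → Prop) (i j : I) : Prop :=
  Srel θ i (i ⊔ j) ∧ Srel θ j (i ⊔ j)

/-- A semilattice congruence on `I`: an equivalence relation compatible with `⊔`. -/
def IsSemilatticeCong {I : Type*} [SemilatticeSup I] (C : I → I → Prop) : Prop :=
  Equivalence C ∧ ∀ i₁ j₁ i₂ j₂, C i₁ j₁ → C i₂ j₂ → C (i₁ ⊔ i₂) (j₁ ⊔ j₂)

/-! Multiplying a θ-related pair `x θ y` by `pinv x θ pinv y` relates the identities of the two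
fibres, so `(i, j) ∈ S_θ` exactly when `⟨i, 1⟩ θ ⟨j, 1⟩`; hence `S_θ` is transitive. Conversely,
multiplying by the identity `⟨i ⊔ k, 1⟩` carries a related pair over `i` and `k` into the fibre
over `i ⊔ k`. -/

section PlonkaSum

variable (p : ∀ i j : I, i ≤ j → (G i →* G j))

theorem sigma_mk_map_eq {i n m : I} (e : n = m) (hin : i ≤ n) (him : i ≤ m) (a : G i) :
    (⟨n, p i n hin a⟩ : Σ i, G i) = ⟨m, p i m him a⟩ := by
  subst e; rfl

theorem pmul_mk_one_of_le {i m : I} (him : i ≤ m) (a : G i) :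
    pmul p ⟨i, a⟩ ⟨m, 1⟩ = ⟨m, p i m him a⟩ := by
  simp only [pmul, map_one, mul_one]
  exact sigma_mk_map_eq p (sup_eq_right.mpr him) _ him a

theorem pmul_self_pinv (x : Σ i, G i) : pmul p x (pinv x) = ⟨x.1, 1⟩ := by
  obtain ⟨i, a⟩ := x
  calc pmul p ⟨i, a⟩ (pinv ⟨i, a⟩) = ⟨i ⊔ i, p i (i ⊔ i) le_sup_left (a * a⁻¹)⟩ := by
        rw [map_mul]; rfl
    _ = ⟨i, p i i le_rfl 1⟩ := by rw [mul_inv_cancel]; exact sigma_mk_map_eq p (sup_idem i) _ _ _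
    _ = ⟨i, 1⟩ := by rw [map_one]

end PlonkaSum

namespace IsCong

variable {p : ∀ i j : I, i ≤ j → (G i →* G j)} {θ : (Σ i, G i) → (Σ i, G i) → Prop}

theorem map_rel {i j : I} {a : G i} {b : G j} (hθ : IsCong p θ) (h : θ ⟨i, a⟩ ⟨j, b⟩)
    (m : I) (him : i ≤ m) (hjm : j ≤ m) : θ ⟨m, p i m him a⟩ ⟨m, p j m hjm b⟩ := by
  have h' := hθ.2.1 _ _ _ _ h (hθ.1.refl ⟨m, 1⟩)
  rwa [pmul_mk_one_of_le p him, pmul_mk_one_of_le p hjm] at h'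

theorem one_rel_one {x y : Σ i, G i} (hθ : IsCong p θ) (h : θ x y) : θ ⟨x.1, 1⟩ ⟨y.1, 1⟩ := by
  have h' := hθ.2.1 _ _ _ _ h (hθ.2.2 _ _ h)
  rwa [pmul_self_pinv, pmul_self_pinv] at h'

theorem srel_iff_one_rel_one (hθ : IsCong p θ) {i j : I} :
    Srel θ i j ↔ θ ⟨i, (1 : G i)⟩ ⟨j, (1 : G j)⟩ :=
  ⟨fun ⟨_, _, h⟩ => hθ.one_rel_one h, fun h => ⟨1, 1, h⟩⟩

theorem srel_trans (hθ : IsCong p θ) {i j k : I} (hij : Srel θ i j) (hjk : Srel θ j k) :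
    Srel θ i k :=
  hθ.srel_iff_one_rel_one.2 <|
    hθ.1.trans (hθ.srel_iff_one_rel_one.1 hij) (hθ.srel_iff_one_rel_one.1 hjk)

end IsCong

theorem Srel_trans_iff_general
    (p : ∀ i j : I, i ≤ j → (G i →* G j))
    (θ : (Σ i, G i) → (Σ i, G i) → Prop) (hθ : IsCong p θ)
    (i j k : I) (hij : Srel θ i j) (hjk : Srel θ j k) :
    Srel θ i k ↔
      ∃ (a : G i) (c : G k),
        θ ⟨i ⊔ k, p i (i ⊔ k) le_sup_left a⟩ ⟨i ⊔ k, p k (i ⊔ k) le_sup_right c⟩ :=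
  ⟨fun ⟨a, c, hac⟩ => ⟨a, c, hθ.map_rel hac (i ⊔ k) le_sup_left le_sup_right⟩,
    fun _ => hθ.srel_trans hij hjk⟩

/-- Characterization of transitivity of `S_θ`: if `(i,j) ∈ S_θ` and `(j,k) ∈ S_θ`, then
`(i,k) ∈ S_θ` iff some `a ∈ G i`, `c ∈ G k` have θ-related images in the fiber over `i⊔k`. -/
theorem Srel_trans_iff
    (p : ∀ i j : I, i ≤ j → (G i →* G j))
    (hid : ∀ (i : I) (h : i ≤ i) (a : G i), p i i h a = a)
    (hcomp : ∀ (i j k : I) (hij : i ≤ j) (hjk : j ≤ k) (a : G i),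
      p j k hjk (p i j hij a) = p i k (hij.trans hjk) a)
    (θ : (Σ i, G i) → (Σ i, G i) → Prop) (hθ : IsCong p θ)
    (i j k : I) (hij : Srel θ i j) (hjk : Srel θ j k) :
    Srel θ i k ↔
      ∃ (a : G i) (c : G k),
        θ ⟨i ⊔ k, p i (i ⊔ k) le_sup_left a⟩ ⟨i ⊔ k, p k (i ⊔ k) le_sup_right c⟩ :=
  Srel_trans_iff_general p θ hθ i j k hij hjk
end

section
/- Let θ be a congruence on the Płonka sum A of a semilattice direct system of groups. Then: (i) C_θ is a semilattice congruence on I; (ii) for every (i,j) ∈ I × I, (i,j) ∈ S_θ if and only if (i,j) ∈ C_θ and there exist a ∈ G i and b ∈ G j with ⟨i⊔j, p_{i,i⊔j}(a)⟩ θ-related to ⟨i⊔j, p_{j,i⊔j}(b)⟩; (iii) C_θ is the smallest semilattice congruence on I containing S_θ, i.e. S_θ ⊆ C_θ and every semilattice congruence on I containing S_θ contains C_θ. -/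
/-! Płonka sum of a semilattice direct system of groups.

`I` is a join-semilattice, `G i` are groups, and `p i j h : G i →* G j` (for `h : i ≤ j`)
are the transition homomorphisms. The Płonka sum is the sigma type `Σ i, G i` with
multiplication `⟨i,a⟩·⟨j,b⟩ = ⟨i⊔j, p_{i,i⊔j}(a) · p_{j,i⊔j}(b)⟩` and inversion
`⟨i,a⟩⁻¹ = ⟨i,a⁻¹⟩` (a Clifford semigroup). -/

variable {I : Type*} [SemilatticeSup I] {G : I → Type*} [∀ i, Group (G i)]

/-! Multiplying a relation `θ ⟨i, a⟩ ⟨j, b⟩` by its inverse shows that `S_θ i j` holds exactly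
when `θ` relates the identities of `G i` and `G j`. Since the identities multiply as
`⟨i, 1⟩ · ⟨j, 1⟩ = ⟨i ⊔ j, 1⟩`, this makes `S_θ` itself a semilattice congruence, and for any
semilattice congruence `C` one has `C i j ↔ C i (i ⊔ j) ∧ C j (i ⊔ j)`; hence `C_θ = S_θ`. -/

theorem IsSemilatticeCong.iff_sup {C : I → I → Prop} (hC : IsSemilatticeCong C) (i j : I) :
    C i j ↔ C i (i ⊔ j) ∧ C j (i ⊔ j) := by
  refine ⟨fun h => ⟨?_, ?_⟩, fun h => hC.1.trans h.1 (hC.1.symm h.2)⟩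
  · simpa only [sup_idem] using hC.2 i i i j (hC.1.refl i) h
  · simpa only [sup_idem] using hC.2 j i j j (hC.1.symm h) (hC.1.refl j)

section Plonka

variable {p : ∀ i j : I, i ≤ j → (G i →* G j)}

theorem pmul_one_one (i j : I) : pmul p ⟨i, (1 : G i)⟩ ⟨j, (1 : G j)⟩ = ⟨i ⊔ j, 1⟩ := by
  simp only [pmul, map_one, mul_one]

theorem pmul_pinv_self (i : I) (a : G i) : pmul p ⟨i, a⟩ (pinv ⟨i, a⟩) = ⟨i ⊔ i, 1⟩ := by
  change (⟨i ⊔ i, p i (i ⊔ i) le_sup_left a * p i (i ⊔ i) le_sup_right a⁻¹⟩ : Σ i, G i) = _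
  rw [← map_mul, mul_inv_cancel, map_one]

variable {θ : (Σ i, G i) → (Σ i, G i) → Prop}

namespace IsCong

theorem rel_one_one (hθ : IsCong p θ) {i j : I} {a : G i} {b : G j} (h : θ ⟨i, a⟩ ⟨j, b⟩) :
    θ ⟨i, (1 : G i)⟩ ⟨j, (1 : G j)⟩ := by
  have h' := hθ.2.1 _ _ _ _ h (hθ.2.2 _ _ h)
  rwa [pmul_pinv_self, pmul_pinv_self, sup_idem, sup_idem] at h'

theorem srel_iff (hθ : IsCong p θ) (i j : I) :
    Srel θ i j ↔ θ ⟨i, (1 : G i)⟩ ⟨j, (1 : G j)⟩ :=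
  ⟨fun ⟨_, _, h⟩ => hθ.rel_one_one h, fun h => ⟨1, 1, h⟩⟩

theorem isSemilatticeCong_srel (hθ : IsCong p θ) : IsSemilatticeCong (Srel θ) := by
  have hS : Srel θ = fun i j => θ ⟨i, (1 : G i)⟩ ⟨j, (1 : G j)⟩ :=
    funext₂ fun i j => propext (hθ.srel_iff i j)
  rw [hS]
  refine ⟨⟨fun _ => hθ.1.refl _, hθ.1.symm, hθ.1.trans⟩, fun i₁ j₁ i₂ j₂ h₁ h₂ => ?_⟩
  simpa only [pmul_one_one] using hθ.2.1 _ _ _ _ h₁ h₂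

theorem crel_iff_srel (hθ : IsCong p θ) (i j : I) : Crel θ i j ↔ Srel θ i j :=
  (hθ.isSemilatticeCong_srel.iff_sup i j).symm

end IsCong

end Plonka

theorem Crel_properties_general
    (p : ∀ i j : I, i ≤ j → (G i →* G j))
    (θ : (Σ i, G i) → (Σ i, G i) → Prop) (hθ : IsCong p θ) :
    -- (i)
    IsSemilatticeCong (Crel θ) ∧
    -- (ii)
    (∀ i j : I, Srel θ i j ↔
      Crel θ i j ∧ ∃ (a : G i) (b : G j),
        θ ⟨i ⊔ j, p i (i ⊔ j) le_sup_left a⟩ ⟨i ⊔ j, p j (i ⊔ j) le_sup_right b⟩) ∧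
    -- (iii)
    (∀ i j : I, Srel θ i j → Crel θ i j) ∧
    (∀ C : I → I → Prop, IsSemilatticeCong C → (∀ i j : I, Srel θ i j → C i j) →
      ∀ i j : I, Crel θ i j → C i j) := by
  have hCS : Crel θ = Srel θ := funext₂ fun i j => propext (hθ.crel_iff_srel i j)
  have hfiber : ∀ i j : I,
      θ ⟨i ⊔ j, p i (i ⊔ j) le_sup_left 1⟩ ⟨i ⊔ j, p j (i ⊔ j) le_sup_right 1⟩ := by
    intro i j
    simp only [map_one]
    exact hθ.1.refl _
  rw [hCS]
  exact ⟨hθ.isSemilatticeCong_srel, fun i j => ⟨fun h => ⟨h, 1, 1, hfiber i j⟩, And.left⟩,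
    fun _ _ => id, fun _ _ hSC => hSC⟩

/-- For a congruence `θ` on the Płonka sum: (i) `C_θ` is a semilattice congruence on `I`;
(ii) `(i,j) ∈ S_θ` iff `(i,j) ∈ C_θ` and some `a ∈ G i`, `b ∈ G j` have θ-related images
in the fiber over `i⊔j`; (iii) `C_θ` is the smallest semilattice congruence containing `S_θ`. -/
theorem Crel_properties
    (p : ∀ i j : I, i ≤ j → (G i →* G j))
    (hid : ∀ (i : I) (h : i ≤ i) (a : G i), p i i h a = a)
    (hcomp : ∀ (i j k : I) (hij : i ≤ j) (hjk : j ≤ k) (a : G i),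
      p j k hjk (p i j hij a) = p i k (hij.trans hjk) a)
    (θ : (Σ i, G i) → (Σ i, G i) → Prop) (hθ : IsCong p θ) :
    -- (i)
    IsSemilatticeCong (Crel θ) ∧
    -- (ii)
    (∀ i j : I, Srel θ i j ↔
      Crel θ i j ∧ ∃ (a : G i) (b : G j),
        θ ⟨i ⊔ j, p i (i ⊔ j) le_sup_left a⟩ ⟨i ⊔ j, p j (i ⊔ j) le_sup_right b⟩) ∧
    -- (iii)
    (∀ i j : I, Srel θ i j → Crel θ i j) ∧
    (∀ C : I → I → Prop, IsSemilatticeCong C → (∀ i j : I, Srel θ i j → C i j) →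
      ∀ i j : I, Crel θ i j → C i j) :=
  Crel_properties_general p θ hθ
end

section
/- Let θ be a congruence on the Płonka sum A of a semilattice direct system of groups. Then: (i) for all i, j ∈ I and all a, b ∈ G i, if (a,b) ∈ θ_{ii} then (p_{i,i⊔j}(a), p_{i,i⊔j}(b)) ∈ θ_{i⊔j, i⊔j}; (ii) if moreover (i,j) ∈ S_θ, then conversely (p_{i,i⊔j}(a), p_{i,i⊔j}(b)) ∈ θ_{i⊔j, i⊔j} implies (a,b) ∈ θ_{ii}; (iii) if (i,j) ∈ S_θ, then for all a ∈ G i and b ∈ G j, (a,b) ∈ θ_{ij} if and only if (p_{i,i⊔j}(a), p_{j,i⊔j}(b)) ∈ θ_{i⊔j, i⊔j}. -/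
/-! Płonka sum of a semilattice direct system of groups.

`I` is a join-semilattice, `G i` are groups, and `p i j h : G i →* G j` (for `h : i ≤ j`)
are the transition homomorphisms. The Płonka sum is the sigma type `Σ i, G i` with
multiplication `⟨i,a⟩·⟨j,b⟩ = ⟨i⊔j, p_{i,i⊔j}(a) · p_{j,i⊔j}(b)⟩` and inversion
`⟨i,a⟩⁻¹ = ⟨i,a⁻¹⟩` (a Clifford semigroup). -/

variable {I : Type*} [SemilatticeSup I] {G : I → Type*} [∀ i, Group (G i)]

/-!
A pair `⟨i, c⟩ θ ⟨j, d⟩` multiplied by its inverse gives `⟨i, 1⟩ θ ⟨j, 1⟩`, so `(i, j) ∈ S_θ`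
relates the identities of `G i` and `G j`. Multiplying `⟨i, a⟩ = ⟨i, a⟩ ⟨i, 1⟩` by this pair gives
`⟨i, a⟩ θ ⟨i ⊔ j, p_{i,i⊔j} a⟩`: every element is `θ`-related to its image in `G (i ⊔ j)`, and
(ii), (iii) follow by transitivity. Part (i) is multiplication by `⟨j, 1⟩`.
-/

section PlonkaSum

variable (p : ∀ i j : I, i ≤ j → (G i →* G j))

theorem pmul_mk_one_right {i : I} (a : G i) (j : I) :
    pmul p ⟨i, a⟩ ⟨j, 1⟩ = ⟨i ⊔ j, p i (i ⊔ j) le_sup_left a⟩ := by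
  simp [pmul]

theorem pmul_one_mk_left (i : I) {j : I} (b : G j) :
    pmul p ⟨i, 1⟩ ⟨j, b⟩ = ⟨i ⊔ j, p j (i ⊔ j) le_sup_right b⟩ := by
  simp [pmul]

variable {p}

theorem sigma_mk_map_of_eq (hid : ∀ (i : I) (h : i ≤ i) (a : G i), p i i h a = a)
    {i k : I} (e : i = k) (h : i ≤ k) (a : G i) :
    (⟨k, p i k h a⟩ : Σ i, G i) = ⟨i, a⟩ := by
  subst e
  rw [hid]

theorem pmul_mk_mk_same (hid : ∀ (i : I) (h : i ≤ i) (a : G i), p i i h a = a)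
    {i : I} (a b : G i) : pmul p ⟨i, a⟩ ⟨i, b⟩ = ⟨i, a * b⟩ := by
  unfold pmul
  rw [← map_mul]
  exact sigma_mk_map_of_eq hid (sup_idem i).symm _ _

variable {θ : (Σ i, G i) → (Σ i, G i) → Prop}

theorem IsCong.rel_map_sup_left (hθ : IsCong p θ) {i : I} {a b : G i}
    (h : θ ⟨i, a⟩ ⟨i, b⟩) (j : I) :
    θ ⟨i ⊔ j, p i (i ⊔ j) le_sup_left a⟩ ⟨i ⊔ j, p i (i ⊔ j) le_sup_left b⟩ := by
  simpa only [pmul_mk_one_right] using hθ.2.1 _ _ _ _ h (hθ.1.refl ⟨j, 1⟩)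

theorem IsCong.rel_one_of_srel (hid : ∀ (i : I) (h : i ≤ i) (a : G i), p i i h a = a)
    (hθ : IsCong p θ) {i j : I} (hS : Srel θ i j) : θ ⟨i, 1⟩ ⟨j, 1⟩ := by
  obtain ⟨c, d, hcd⟩ := hS
  have h := hθ.2.1 _ _ _ _ (hθ.2.2 _ _ hcd) hcd
  simpa only [pinv, pmul_mk_mk_same hid, inv_mul_cancel] using h

theorem IsCong.rel_mk_map_sup_left (hid : ∀ (i : I) (h : i ≤ i) (a : G i), p i i h a = a)
    (hθ : IsCong p θ) {i j : I} (h₁ : θ ⟨i, 1⟩ ⟨j, 1⟩) (a : G i) :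
    θ ⟨i, a⟩ ⟨i ⊔ j, p i (i ⊔ j) le_sup_left a⟩ := by
  have h := hθ.2.1 _ _ _ _ (hθ.1.refl ⟨i, a⟩) h₁
  rwa [pmul_mk_mk_same hid, mul_one, pmul_mk_one_right] at h

theorem IsCong.rel_map_sup_right_mk (hid : ∀ (i : I) (h : i ≤ i) (a : G i), p i i h a = a)
    (hθ : IsCong p θ) {i j : I} (h₁ : θ ⟨i, 1⟩ ⟨j, 1⟩) (b : G j) :
    θ ⟨i ⊔ j, p j (i ⊔ j) le_sup_right b⟩ ⟨j, b⟩ := by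
  have h := hθ.2.1 _ _ _ _ h₁ (hθ.1.refl ⟨j, b⟩)
  rwa [pmul_mk_mk_same hid, one_mul, pmul_one_mk_left] at h

end PlonkaSum

theorem fiber_properties_general
    (p : ∀ i j : I, i ≤ j → (G i →* G j))
    (hid : ∀ (i : I) (h : i ≤ i) (a : G i), p i i h a = a)
    (θ : (Σ i, G i) → (Σ i, G i) → Prop) (hθ : IsCong p θ) :
    -- (i)
    (∀ (i j : I) (a b : G i), θ ⟨i, a⟩ ⟨i, b⟩ →
      θ ⟨i ⊔ j, p i (i ⊔ j) le_sup_left a⟩ ⟨i ⊔ j, p i (i ⊔ j) le_sup_left b⟩) ∧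
    -- (ii)
    (∀ i j : I, Srel θ i j → ∀ a b : G i,
      θ ⟨i ⊔ j, p i (i ⊔ j) le_sup_left a⟩ ⟨i ⊔ j, p i (i ⊔ j) le_sup_left b⟩ →
      θ ⟨i, a⟩ ⟨i, b⟩) ∧
    -- (iii)
    (∀ i j : I, Srel θ i j → ∀ (a : G i) (b : G j),
      θ ⟨i, a⟩ ⟨j, b⟩ ↔
        θ ⟨i ⊔ j, p i (i ⊔ j) le_sup_left a⟩ ⟨i ⊔ j, p j (i ⊔ j) le_sup_right b⟩) := by
  have θequiv := hθ.1
  refine ⟨fun i j a b h ↦ hθ.rel_map_sup_left h j, fun i j hS a b h ↦ ?_, fun i j hS a b ↦ ?_⟩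
  · have h₁ := hθ.rel_one_of_srel hid hS
    exact θequiv.trans (hθ.rel_mk_map_sup_left hid h₁ a)
      (θequiv.trans h (θequiv.symm (hθ.rel_mk_map_sup_left hid h₁ b)))
  · have h₁ := hθ.rel_one_of_srel hid hS
    have ha := hθ.rel_mk_map_sup_left hid h₁ a
    have hb := hθ.rel_map_sup_right_mk hid h₁ b
    exact ⟨fun h ↦ θequiv.trans (θequiv.symm ha) (θequiv.trans h (θequiv.symm hb)),
      fun h ↦ θequiv.trans ha (θequiv.trans h hb)⟩

/-- Structure of the fibers `θ_{ij} := {(a,b) : θ ⟨i,a⟩ ⟨j,b⟩}` of a congruence `θ`: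
(i) pure fibers are pushed forward by the transition maps; (ii) if `(i,j) ∈ S_θ` the
converse holds; (iii) for `(i,j) ∈ S_θ` the mixed fiber `θ_{ij}` is the preimage of the
pure fiber `θ_{i⊔j,i⊔j}` under `p_{i,i⊔j} × p_{j,i⊔j}`. -/
theorem fiber_properties
    (p : ∀ i j : I, i ≤ j → (G i →* G j))
    (hid : ∀ (i : I) (h : i ≤ i) (a : G i), p i i h a = a)
    (hcomp : ∀ (i j k : I) (hij : i ≤ j) (hjk : j ≤ k) (a : G i),
      p j k hjk (p i j hij a) = p i k (hij.trans hjk) a)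
    (θ : (Σ i, G i) → (Σ i, G i) → Prop) (hθ : IsCong p θ) :
    -- (i)
    (∀ (i j : I) (a b : G i), θ ⟨i, a⟩ ⟨i, b⟩ →
      θ ⟨i ⊔ j, p i (i ⊔ j) le_sup_left a⟩ ⟨i ⊔ j, p i (i ⊔ j) le_sup_left b⟩) ∧
    -- (ii)
    (∀ i j : I, Srel θ i j → ∀ a b : G i,
      θ ⟨i ⊔ j, p i (i ⊔ j) le_sup_left a⟩ ⟨i ⊔ j, p i (i ⊔ j) le_sup_left b⟩ →
      θ ⟨i, a⟩ ⟨i, b⟩) ∧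
    -- (iii)
    (∀ i j : I, Srel θ i j → ∀ (a : G i) (b : G j),
      θ ⟨i, a⟩ ⟨j, b⟩ ↔
        θ ⟨i ⊔ j, p i (i ⊔ j) le_sup_left a⟩ ⟨i ⊔ j, p j (i ⊔ j) le_sup_right b⟩) :=
  fiber_properties_general p hid θ hθ
end
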